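/- Let ψᵢ : ℝ² → ℝ (1 ≤ i ≤ k) be C^∞ functions. Define the vector field v(x,y) = (Σᵢ (∂ψᵢ/∂y + ψᵢ fᵢ)·∏_{j≠i} ψⱼ , Σᵢ (−∂ψᵢ/∂x + ψᵢ gᵢ)·∏_{j≠i} ψⱼ) where fᵢ, gᵢ are arbitrary C^∞ functions. Then for every i, at any point (x,y) with ψᵢ(x,y) = 0, the gradient of ψᵢ is orthogonal to v(x,y); i.e., each zero level set of ψᵢ is invariant under the flow of v. -/
import Mathlib


/-- The vector field of equation (12): each zero level set of ψᵢ is invariant,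
i.e. the gradient of ψᵢ is orthogonal to the field on {ψᵢ = 0}. -/
theorem stmt1 (k : ℕ) (ψ f g : Fin k → ℝ × ℝ → ℝ)
    (hψ : ∀ i, ContDiff ℝ (⊤ : ℕ∞) (ψ i)) (hf : ∀ i, ContDiff ℝ (⊤ : ℕ∞) (f i))
    (hg : ∀ i, ContDiff ℝ (⊤ : ℕ∞) (g i))
    (v : ℝ × ℝ → ℝ × ℝ)
    (hv : ∀ p, v p =
      (∑ i, (fderiv ℝ (ψ i) p (0, 1) + ψ i p * f i p) * ∏ j ∈ Finset.univ.erase i, ψ j p,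
       ∑ i, (-fderiv ℝ (ψ i) p (1, 0) + ψ i p * g i p) * ∏ j ∈ Finset.univ.erase i, ψ j p)) :
    ∀ i, ∀ p : ℝ × ℝ, ψ i p = 0 →
      fderiv ℝ (ψ i) p (1, 0) * (v p).1 + fderiv ℝ (ψ i) p (0, 1) * (v p).2 = 0 := by
  intro i p hp
  rw [hv]
  have hz : ∀ j : Fin k, j ≠ i → (∏ l ∈ Finset.univ.erase j, ψ l p) = 0 := fun j hj =>
    Finset.prod_eq_zero (Finset.mem_erase.mpr ⟨fun h => hj h.symm, Finset.mem_univ i⟩) hp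
  have h1 : (∑ j, (fderiv ℝ (ψ j) p (0, 1) + ψ j p * f j p) *
      ∏ l ∈ Finset.univ.erase j, ψ l p) =
      fderiv ℝ (ψ i) p (0, 1) * ∏ l ∈ Finset.univ.erase i, ψ l p := by
    rw [Finset.sum_eq_single i]
    · rw [hp]; ring
    · intro j _ hj; rw [hz j hj]; ring
    · intro h; exact absurd (Finset.mem_univ i) h
  have h2 : (∑ j, (-fderiv ℝ (ψ j) p (1, 0) + ψ j p * g j p) *
      ∏ l ∈ Finset.univ.erase j, ψ l p) =
      -fderiv ℝ (ψ i) p (1, 0) * ∏ l ∈ Finset.univ.erase i, ψ l p := by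
    rw [Finset.sum_eq_single i]
    · rw [hp]; ring
    · intro j _ hj; rw [hz j hj]; ring
    · intro h; exact absurd (Finset.mem_univ i) h
  simp only [h1, h2]
  ring
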